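/- Let d ≥ 1 and c ≥ 0. Let g be continuously differentiable on an open set U ⊆ {(x,t) ∈ ℝ^d×ℝ : t > 0, t² − c‖x‖² > 0}, and set G = g∘ψ⁻¹ on ψ(U). Then on U: (i) for all 1 ≤ i < j ≤ d, (y_i ∂_{y_j} G − y_j ∂_{y_i} G)∘ψ = x_i ∂_{x_j} g − x_j ∂_{x_i} g; and (ii) for all 1 ≤ i ≤ d, (y_i ∂_{y_{d+1}} G − y_{d+1} ∂_{y_i} G)∘ψ = −(sqrt(t²−c‖x‖²)/t)·( t ∂_{x_i} g − (1−c)·x_i·∂_t g ). -/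

import Mathlib

open MeasureTheory

noncomputable section

/-- Euclidean space `ℝ^d`. -/
abbrev Euc (d : ℕ) := EuclideanSpace ℝ (Fin d)

/-- The map `ψ(x,t) = (x, sqrt(t²−c‖x‖²))` (the case `a = 0`, `b = 1`). -/
def psi0 (d : ℕ) (c : ℝ) (p : Euc d × ℝ) : Euc d × ℝ :=
  (p.1, Real.sqrt (p.2 ^ 2 - c * ‖p.1‖ ^ 2))

/-- The inverse map `ψ⁻¹(y,v) = (y, sqrt(v²+c‖y‖²))`. -/
def psi0Inv (d : ℕ) (c : ℝ) (p : Euc d × ℝ) : Euc d × ℝ :=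
  (p.1, Real.sqrt (p.2 ^ 2 + c * ‖p.1‖ ^ 2))

/-- Partial derivative in the `i`-th coordinate of `ℝ^d`, for functions on `ℝ^d × ℝ`. -/
def pdE (d : ℕ) (i : Fin d) (f : Euc d × ℝ → ℝ) (p : Euc d × ℝ) : ℝ :=
  fderiv ℝ f p (EuclideanSpace.single i 1, 0)

/-- Partial derivative in the last coordinate, for functions on `ℝ^d × ℝ`. -/
def pdT (d : ℕ) (f : Euc d × ℝ → ℝ) (p : Euc d × ℝ) : ℝ :=
  fderiv ℝ f p (0, 1)

/-! Where `v² + c‖y‖² ≠ 0`, `ψ⁻¹` is differentiable and inverts `ψ` on the region `t > 0`,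
`t² ≥ c‖x‖²`. The chain rule then gives `∂_{y_i} G ∘ ψ = ∂_{x_i} g + (c x_i / t) ∂_t g` and
`∂_v G ∘ ψ = (√(t² − c‖x‖²) / t) ∂_t g`, after which both identities are algebra. -/

open Real RealInnerProductSpace

theorem ContinuousLinearMap.apply_prod_eq_add_smul {E F : Type*} [NormedAddCommGroup E]
    [NormedSpace ℝ E] [NormedAddCommGroup F] [NormedSpace ℝ F]
    (L : E × ℝ →L[ℝ] F) (u : E) (a : ℝ) : L (u, a) = L (u, 0) + a • L (0, 1) := by
  rw [← map_smul, ← map_add, Prod.smul_mk, smul_zero, Prod.mk_add_mk, add_zero, zero_add,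
    smul_eq_mul, mul_one]

section Psi

variable {d : ℕ} {c : ℝ}

theorem psi0Inv_psi0 {p : Euc d × ℝ} (ht : 0 ≤ p.2) (hs : 0 ≤ p.2 ^ 2 - c * ‖p.1‖ ^ 2) :
    psi0Inv d c (psi0 d c p) = p := by
  simp only [psi0Inv, psi0, sq_sqrt hs, sub_add_cancel, sqrt_sq ht]

theorem hasFDerivAt_psi0Inv {q : Euc d × ℝ} (hq : q.2 ^ 2 + c * ‖q.1‖ ^ 2 ≠ 0) :
    HasFDerivAt (psi0Inv d c)
      ((ContinuousLinearMap.fst ℝ _ _).prod ((psi0Inv d c q).2⁻¹ •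
        (q.2 • ContinuousLinearMap.snd ℝ _ _ +
          c • (innerSL ℝ q.1).comp (ContinuousLinearMap.fst ℝ _ _)))) q := by
  refine (hasFDerivAt_fst.prodMk
    (((hasFDerivAt_snd.pow 2).add (hasFDerivAt_fst.norm_sq.const_mul c)).sqrt hq)).congr_fderiv ?_
  ext v <;> simp [psi0Inv] <;> ring

theorem fderiv_psi0Inv_apply {q : Euc d × ℝ} (hq : q.2 ^ 2 + c * ‖q.1‖ ^ 2 ≠ 0)
    (v : Euc d × ℝ) :
    fderiv ℝ (psi0Inv d c) q v = (v.1, (q.2 * v.2 + c * ⟪q.1, v.1⟫) / (psi0Inv d c q).2) := by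
  rw [(hasFDerivAt_psi0Inv hq).fderiv]
  simp only [psi0Inv, ContinuousLinearMap.prod_apply, ContinuousLinearMap.coe_fst',
    smul_apply, add_apply, ContinuousLinearMap.coe_snd',
    ContinuousLinearMap.comp_apply, coe_innerSL_apply, smul_eq_mul, Prod.mk.injEq, true_and]
  ring

variable {p : Euc d × ℝ} {g : Euc d × ℝ → ℝ}

theorem fderiv_comp_psi0Inv_psi0_apply (ht : 0 < p.2) (hs : 0 ≤ p.2 ^ 2 - c * ‖p.1‖ ^ 2)
    (hg : DifferentiableAt ℝ g p) (v : Euc d × ℝ) :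
    fderiv ℝ (g ∘ psi0Inv d c) (psi0 d c p) v
      = fderiv ℝ g p (v.1, (√(p.2 ^ 2 - c * ‖p.1‖ ^ 2) * v.2 + c * ⟪p.1, v.1⟫) / p.2) := by
  have hinv := psi0Inv_psi0 ht.le hs
  have hq : (psi0 d c p).2 ^ 2 + c * ‖(psi0 d c p).1‖ ^ 2 ≠ 0 := by
    simp only [psi0, sq_sqrt hs, sub_add_cancel]
    positivity
  rw [fderiv_comp _ (by rwa [hinv]) (hasFDerivAt_psi0Inv hq).differentiableAt,
    ContinuousLinearMap.comp_apply, fderiv_psi0Inv_apply hq, hinv]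
  rfl

theorem pdE_comp_psi0Inv_psi0 (ht : 0 < p.2) (hs : 0 ≤ p.2 ^ 2 - c * ‖p.1‖ ^ 2)
    (hg : DifferentiableAt ℝ g p) (i : Fin d) :
    pdE d i (g ∘ psi0Inv d c) (psi0 d c p) = pdE d i g p + c * p.1 i / p.2 * pdT d g p := by
  rw [pdE, fderiv_comp_psi0Inv_psi0_apply ht hs hg, ContinuousLinearMap.apply_prod_eq_add_smul]
  simp [pdE, pdT, EuclideanSpace.inner_single_right]

theorem pdT_comp_psi0Inv_psi0 (ht : 0 < p.2) (hs : 0 ≤ p.2 ^ 2 - c * ‖p.1‖ ^ 2)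
    (hg : DifferentiableAt ℝ g p) :
    pdT d (g ∘ psi0Inv d c) (psi0 d c p) = √(p.2 ^ 2 - c * ‖p.1‖ ^ 2) / p.2 * pdT d g p := by
  rw [pdT, fderiv_comp_psi0Inv_psi0_apply ht hs hg, ContinuousLinearMap.apply_prod_eq_add_smul]
  simp [pdT, Prod.mk_zero_zero]

end Psi

theorem angular_derivatives_under_psi_general
    (d : ℕ) (c : ℝ)
    (U : Set (Euc d × ℝ)) (hUopen : IsOpen U)
    (hUsub : U ⊆ {p : Euc d × ℝ | 0 < p.2 ∧ 0 < p.2 ^ 2 - c * ‖p.1‖ ^ 2})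
    (g : Euc d × ℝ → ℝ) (hg : ContDiffOn ℝ 1 g U) :
    (∀ i j : Fin d, i < j → ∀ p ∈ U,
      (psi0 d c p).1 i * pdE d j (g ∘ psi0Inv d c) (psi0 d c p)
          - (psi0 d c p).1 j * pdE d i (g ∘ psi0Inv d c) (psi0 d c p)
        = p.1 i * pdE d j g p - p.1 j * pdE d i g p) ∧
    (∀ i : Fin d, ∀ p ∈ U,
      (psi0 d c p).1 i * pdT d (g ∘ psi0Inv d c) (psi0 d c p)
          - (psi0 d c p).2 * pdE d i (g ∘ psi0Inv d c) (psi0 d c p)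
        = -(Real.sqrt (p.2 ^ 2 - c * ‖p.1‖ ^ 2) / p.2) *
            (p.2 * pdE d i g p - (1 - c) * p.1 i * pdT d g p)) := by
  have hdiff : ∀ p ∈ U, DifferentiableAt ℝ g p := fun p hp =>
    (hg.differentiableOn one_ne_zero).differentiableAt (hUopen.mem_nhds hp)
  refine ⟨fun i j _ p hp => ?_, fun i p hp => ?_⟩ <;> obtain ⟨ht, hs⟩ := hUsub hp
  · rw [pdE_comp_psi0Inv_psi0 ht hs.le (hdiff p hp), pdE_comp_psi0Inv_psi0 ht hs.le (hdiff p hp)]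
    simp only [psi0]
    ring
  · rw [pdE_comp_psi0Inv_psi0 ht hs.le (hdiff p hp), pdT_comp_psi0Inv_psi0 ht hs.le (hdiff p hp)]
    simp only [psi0]
    field_simp
    ring

/-- behaviour of the angular derivatives under `ψ`, for `G = g∘ψ⁻¹`:
`(y_i ∂_{y_j} G − y_j ∂_{y_i} G)∘ψ = x_i ∂_{x_j} g − x_j ∂_{x_i} g` for `i < j ≤ d`, and
`(y_i ∂_{y_{d+1}} G − y_{d+1} ∂_{y_i} G)∘ψ = −(sqrt(t²−c‖x‖²)/t)(t ∂_{x_i} g − (1−c) x_i ∂_t g)`. -/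
theorem angular_derivatives_under_psi
    (d : ℕ) (hd : 1 ≤ d) (c : ℝ) (hc : 0 ≤ c)
    (U : Set (Euc d × ℝ)) (hUopen : IsOpen U)
    (hUsub : U ⊆ {p : Euc d × ℝ | 0 < p.2 ∧ 0 < p.2 ^ 2 - c * ‖p.1‖ ^ 2})
    (g : Euc d × ℝ → ℝ) (hg : ContDiffOn ℝ 1 g U) :
    (∀ i j : Fin d, i < j → ∀ p ∈ U,
      (psi0 d c p).1 i * pdE d j (g ∘ psi0Inv d c) (psi0 d c p)
          - (psi0 d c p).1 j * pdE d i (g ∘ psi0Inv d c) (psi0 d c p)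
        = p.1 i * pdE d j g p - p.1 j * pdE d i g p) ∧
    (∀ i : Fin d, ∀ p ∈ U,
      (psi0 d c p).1 i * pdT d (g ∘ psi0Inv d c) (psi0 d c p)
          - (psi0 d c p).2 * pdE d i (g ∘ psi0Inv d c) (psi0 d c p)
        = -(Real.sqrt (p.2 ^ 2 - c * ‖p.1‖ ^ 2) / p.2) *
            (p.2 * pdE d i g p - (1 - c) * p.1 i * pdT d g p)) :=
  angular_derivatives_under_psi_general d c U hUopen hUsub g hg
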